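/- Let u, v ∈ ℝⁿ be unit ℓ₂-norm vectors with ⟨u, v⟩ ≥ 0. If the operator norm ‖u uᵀ − v vᵀ‖₂ ≤ ε, then ‖u − v‖₂ ≤ √2 · ε. -/

import Mathlib

/-! Applied to `v`, the matrix `u uᵀ - v vᵀ` gives `⟪u, v⟫ u - v`, the component of `-v`
orthogonal to `u`, of squared length `1 - ⟪u, v⟫²`. Since `‖u - v‖² = 2 - 2⟪u, v⟫` and
`0 ≤ ⟪u, v⟫ ≤ 1`, this is at least half of `‖u - v‖²`. -/

open scoped BigOperators

/-- Euclidean (ℓ₂) norm of a finitely-indexed real vector. -/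
noncomputable def enorm {ι : Type*} [Fintype ι] (v : ι → ℝ) : ℝ :=
  Real.sqrt (∑ i, v i ^ 2)

/-- Euclidean inner product of two real vectors. -/
def ip {ι : Type*} [Fintype ι] (u v : ι → ℝ) : ℝ := ∑ i, u i * v i

/-- Spectral (ℓ₂ operator) norm of a real matrix: supremum of ‖A x‖ over unit vectors x. -/
noncomputable def specNorm {m n : Type*} [Fintype m] [Fintype n] (A : Matrix m n ℝ) : ℝ :=
  sSup ((fun x : n → ℝ => _root_.enorm (A.mulVec x)) '' {x | _root_.enorm x = 1})

/-- Frobenius norm of a real matrix. -/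
noncomputable def frobNorm {m n : Type*} [Fintype m] [Fintype n] (A : Matrix m n ℝ) : ℝ :=
  Real.sqrt (∑ i, ∑ j, A i j ^ 2)

/-- Smallest singular value of a real matrix: infimum of ‖A x‖ over unit vectors x. -/
noncomputable def smin {m n : Type*} [Fintype m] [Fintype n] (A : Matrix m n ℝ) : ℝ :=
  sInf ((fun x : n → ℝ => _root_.enorm (A.mulVec x)) '' {x | _root_.enorm x = 1})

/-- Rank-one outer product u vᵀ. -/
def outer {ι : Type*} (u v : ι → ℝ) : Matrix ι ι ℝ := Matrix.of fun i j => u i * v j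

/-- Column submatrix given by a finite index set. -/
def colSub {m n : Type*} (A : Matrix m n ℝ) (s : Finset n) : Matrix m s ℝ :=
  Matrix.of fun i j => A i j

open scoped InnerProductSpace Matrix Matrix.Norms.L2Operator

section EuclideanBridge

variable {ι : Type*} [Fintype ι]

lemma enorm_eq_norm_toLp (v : ι → ℝ) : _root_.enorm v = ‖WithLp.toLp 2 v‖ := by
  simp [_root_.enorm, EuclideanSpace.norm_eq]

lemma ip_eq_inner_toLp (u v : ι → ℝ) : ip u v = ⟪WithLp.toLp 2 u, WithLp.toLp 2 v⟫_ℝ := by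
  simp [ip, EuclideanSpace.inner_toLp_toLp, dotProduct, mul_comm]

lemma ip_self_eq_one_of_enorm_eq_one {v : ι → ℝ} (hv : _root_.enorm v = 1) : ip v v = 1 := by
  rw [ip_eq_inner_toLp, real_inner_self_eq_norm_sq, ← enorm_eq_norm_toLp, hv, one_pow]

lemma outer_mulVec (u w x : ι → ℝ) : outer u w *ᵥ x = ip w x • u := by
  ext i
  simp only [outer, ip, Matrix.mulVec, dotProduct, Matrix.of_apply, Pi.smul_apply, smul_eq_mul,
    Finset.sum_mul]
  exact Finset.sum_congr rfl fun j _ => by ring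

end EuclideanBridge

section SpecNorm

variable {m n : Type*} [Fintype m] [Fintype n]

lemma bddAbove_enorm_mulVec_unit (A : Matrix m n ℝ) :
    BddAbove ((fun x : n → ℝ => _root_.enorm (A *ᵥ x)) '' {x | _root_.enorm x = 1}) := by
  classical
  refine ⟨‖A‖, ?_⟩
  rintro _ ⟨x, hx, rfl⟩
  have h := A.l2_opNorm_mulVec (WithLp.toLp 2 x)
  rw [Set.mem_ofPred_eq, enorm_eq_norm_toLp] at hx
  change _root_.enorm (A *ᵥ x) ≤ ‖A‖
  rw [enorm_eq_norm_toLp]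
  simpa [hx] using h

lemma enorm_mulVec_le_specNorm (A : Matrix m n ℝ) {x : n → ℝ} (hx : _root_.enorm x = 1) :
    _root_.enorm (A *ᵥ x) ≤ specNorm A :=
  le_csSup (bddAbove_enorm_mulVec_unit A) ⟨x, hx, rfl⟩

end SpecNorm

lemma norm_sub_le_sqrt_two_mul_norm_inner_smul_sub {E : Type*} [NormedAddCommGroup E]
    [InnerProductSpace ℝ E] {x y : E} (hx : ‖x‖ = 1) (hy : ‖y‖ = 1) (hxy : 0 ≤ ⟪x, y⟫_ℝ) :
    ‖x - y‖ ≤ √2 * ‖⟪x, y⟫_ℝ • x - y‖ := by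
  set t := ⟪x, y⟫_ℝ
  have ht : t ≤ 1 := by simpa [hx, hy] using real_inner_le_norm x y
  have hsub : ‖x - y‖ ^ 2 = 2 - 2 * t := by
    rw [norm_sub_sq_real, hx, hy]; ring
  have hproj : ‖t • x - y‖ ^ 2 = 1 - t ^ 2 := by
    rw [norm_sub_sq_real, norm_smul, real_inner_smul_left, hx, hy, Real.norm_eq_abs, mul_one,
      sq_abs]
    ring
  rw [← pow_le_pow_iff_left₀ (norm_nonneg _) (by positivity) two_ne_zero, mul_pow,
    Real.sq_sqrt zero_le_two, hsub, hproj]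
  nlinarith

/-- If u, v are unit vectors with ⟨u,v⟩ ≥ 0 and ‖uuᵀ − vvᵀ‖₂ ≤ ε,
then ‖u − v‖₂ ≤ √2 ε. -/
theorem stmt_0 {n : ℕ} (u v : Fin n → ℝ) (ε : ℝ)
    (hu : _root_.enorm u = 1) (hv : _root_.enorm v = 1) (hip : 0 ≤ ip u v)
    (h : specNorm (outer u u - outer v v) ≤ ε) :
    _root_.enorm (u - v) ≤ Real.sqrt 2 * ε := by
  have hAv : (outer u u - outer v v) *ᵥ v = ip u v • u - v := by
    rw [Matrix.sub_mulVec, outer_mulVec, outer_mulVec, ip_self_eq_one_of_enorm_eq_one hv, one_smul]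
  calc _root_.enorm (u - v)
      ≤ √2 * ‖⟪WithLp.toLp 2 u, WithLp.toLp 2 v⟫_ℝ • WithLp.toLp 2 u - WithLp.toLp 2 v‖ := by
        rw [enorm_eq_norm_toLp] at hu hv ⊢
        rw [ip_eq_inner_toLp] at hip
        rw [WithLp.toLp_sub]
        exact norm_sub_le_sqrt_two_mul_norm_inner_smul_sub hu hv hip
    _ = √2 * _root_.enorm ((outer u u - outer v v) *ᵥ v) := by
        rw [hAv, enorm_eq_norm_toLp, ip_eq_inner_toLp, WithLp.toLp_sub, WithLp.toLp_smul]
    _ ≤ √2 * ε := by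
        gcongr
        exact (enorm_mulVec_le_specNorm _ hv).trans h
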